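/- arXiv:2203.04597 — 10 statements merged into one kernel-verified Lean document; each statement's English description precedes it below -/
import Mathlib

section
/- For a weak almost contact structure (φ,Q,ξ,η) on a real vector space V, one has φξ = 0, and the kernel of φ is exactly the line ℝ·ξ spanned by ξ; consequently, if V has finite dimension 2n+1, then the rank of φ equals 2n. -/
noncomputable section

theorem weak_almost_contact_phi_xi_ker_rank
    {V : Type*} [AddCommGroup V] [Module ℝ V]
    (φ Q : V →ₗ[ℝ] V) (hQ : Function.Bijective Q)
    (ξ : V) (η : V →ₗ[ℝ] ℝ) (ν : ℝ) (hν : 0 < ν)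
    (hφφ : ∀ X, φ (φ X) = -(Q X) + η X • Q ξ)
    (hηξ : η ξ = 1)
    (hQξ : Q ξ = ν • ξ)
    (hD : ∀ X, η X = 0 → η (φ X) = 0)
    :
    φ ξ = 0 ∧ LinearMap.ker φ = Submodule.span ℝ {ξ} ∧
    (∀ n : ℕ, FiniteDimensional ℝ V → Module.finrank ℝ V = 2 * n + 1 →
      Module.finrank ℝ (LinearMap.range φ) = 2 * n) := by
  have hξne : ξ ≠ 0 := by
    intro h
    rw [h, map_zero] at hηξ
    norm_num at hηξ
  have hQinj := hQ.injective
  have h1 : φ (φ ξ) = 0 := by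
    rw [hφφ, hηξ, one_smul]
    abel
  have h2 : φ ξ = η (φ ξ) • ξ := by
    have h3 : φ (φ (φ ξ)) = 0 := by rw [h1, map_zero]
    rw [hφφ (φ ξ)] at h3
    have h4 : Q (φ ξ) = Q (η (φ ξ) • ξ) := by
      rw [map_smul]
      linear_combination (norm := module) -h3
    exact hQinj h4
  have hφξ : φ ξ = 0 := by
    have h5 : (η (φ ξ) * η (φ ξ)) • ξ = 0 := by
      calc (η (φ ξ) * η (φ ξ)) • ξ = η (φ ξ) • (η (φ ξ) • ξ) := by
            rw [mul_smul]
        _ = η (φ ξ) • φ ξ := by rw [← h2]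
        _ = φ (η (φ ξ) • ξ) := by rw [map_smul]
        _ = φ (φ ξ) := by rw [← h2]
        _ = 0 := h1
    rcases smul_eq_zero.mp h5 with hc | hc
    · have : η (φ ξ) = 0 := by nlinarith [sq_nonneg (η (φ ξ))]
      rw [h2, this, zero_smul]
    · exact absurd hc hξne
  have hker : LinearMap.ker φ = Submodule.span ℝ {ξ} := by
    ext X
    simp only [LinearMap.mem_ker, Submodule.mem_span_singleton]
    constructor
    · intro hX
      refine ⟨η X, ?_⟩
      have h6 : φ (φ X) = 0 := by rw [hX, map_zero]
      rw [hφφ X] at h6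
      have h7 : Q X = Q (η X • ξ) := by
        rw [map_smul]
        linear_combination (norm := module) -h6
      exact (hQinj h7).symm
    · rintro ⟨a, rfl⟩
      rw [map_smul, hφξ, smul_zero]
  refine ⟨hφξ, hker, ?_⟩
  intro n _ hdim
  have hrn := LinearMap.finrank_range_add_finrank_ker φ
  rw [hker, finrank_span_singleton hξne, hdim] at hrn
  omega
end
end

section
/- For a weak almost contact structure (φ,Q,ξ,η) on a real vector space V, the endomorphisms Q and φ commute: Q(φX) = φ(Q X) for every X ∈ V. -/
noncomputable section

theorem weak_almost_contact_Q_phi_commute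
    {V : Type*} [AddCommGroup V] [Module ℝ V]
    (φ Q : V →ₗ[ℝ] V) (hQ : Function.Bijective Q)
    (ξ : V) (η : V →ₗ[ℝ] ℝ) (ν : ℝ) (hν : 0 < ν)
    (hφφ : ∀ X, φ (φ X) = -(Q X) + η X • Q ξ)
    (hηξ : η ξ = 1)
    (hQξ : Q ξ = ν • ξ)
    (hD : ∀ X, η X = 0 → η (φ X) = 0)
    :
    ∀ X, Q (φ X) = φ (Q X) := by
  -- η(φ X) = η X * η (φ ξ)
  have key : ∀ X, η (φ X) = η X * η (φ ξ) := by
    intro X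
    have h0 : η (X - η X • ξ) = 0 := by simp [hηξ]
    have h1 := hD _ h0
    simp only [map_sub, map_smul] at h1
    simp only [map_sub, map_smul, smul_eq_mul] at h1 ⊢
    linarith
  -- η (φ ξ) = 0
  have hφ2ξ : φ (φ ξ) = 0 := by rw [hφφ, hηξ]; simp
  have hηφξ : η (φ ξ) = 0 := by
    have h := key (φ ξ)
    rw [hφ2ξ, map_zero] at h
    exact (mul_self_eq_zero.mp h.symm)
  have hηφ : ∀ X, η (φ X) = 0 := by
    intro X; rw [key, hηφξ, mul_zero]
  -- φ ξ = 0
  have hφξ : φ ξ = 0 := by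
    apply hQ.1
    have h3 : φ (φ (φ ξ)) = 0 := by rw [hφ2ξ, map_zero]
    rw [hφφ (φ ξ), hηφξ] at h3
    simpa using h3.symm
  intro X
  have e1 : φ (φ (φ X)) = -(Q (φ X)) + η (φ X) • Q ξ := hφφ (φ X)
  have e2 : φ (φ (φ X)) = -(φ (Q X)) + η X • φ (Q ξ) := by
    rw [hφφ X]; simp
  rw [hηφ X] at e1
  rw [hQξ, map_smul, hφξ, smul_zero, smul_zero] at e2
  have h := e1.symm.trans e2
  simp at h
  exact h
end
end

section
/- For a weak almost contact metric structure (φ,Q,ξ,η,g) on a finite-dimensional real vector space V, the endomorphism φ is skew-adjoint and Q is self-adjoint with respect to g: g(φX,Y) = -g(X,φY) and g(Q X,Y) = g(X,Q Y) for all X,Y ∈ V. -/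
/-!
Applying `φ² = -Q + η ⊗ Qξ` to `ξ` and to `φ ξ`, injectivity of `Q` forces `φ ξ = 0`, and then
`φ D ⊆ D` gives `η ∘ φ = 0` and `η ∘ Q = ν η`. With these, the compatibility condition is symmetric
in `X, Y` only if `Q` is self-adjoint, and it identifies `η` with `⟪ξ, ·⟫`. Skew-adjointness of `φ`
is first checked against vectors `Q Z`, using that `φ` commutes with `Q`, and then holds everywhere
because `Q` is onto.
-/

open scoped RealInnerProductSpace

namespace WeakAlmostContact

section Module

variable {R V : Type*} [CommRing R] [AddCommGroup V] [Module R V]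
  {φ Q : V →ₗ[R] V} {ξ : V} {η : V →ₗ[R] R} {ν : R}

theorem apply_xi_eq_zero [NoZeroDivisors R] (hQ : Function.Injective Q)
    (hφφ : ∀ X, φ (φ X) = -(Q X) + η X • Q ξ) (hηξ : η ξ = 1) : φ ξ = 0 := by
  have hφφξ : φ (φ ξ) = 0 := by rw [hφφ, hηξ, one_smul, neg_add_cancel]
  have hφξ : φ ξ = η (φ ξ) • ξ := hQ <| by
    have h := hφφ (φ ξ)
    rw [hφφξ, map_zero] at h
    rw [map_smul]
    exact neg_add_eq_zero.mp h.symm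
  generalize η (φ ξ) = c at hφξ
  have hsq : c * c = 0 := by
    calc c * c = η (φ (φ ξ)) := by
          rw [hφξ, map_smul, hφξ, map_smul, map_smul, hηξ, smul_eq_mul, smul_eq_mul, mul_one]
      _ = 0 := by rw [hφφξ, map_zero]
  rw [hφξ, mul_self_eq_zero.mp hsq, zero_smul]

theorem eta_apply_phi_eq_zero (hφξ : φ ξ = 0) (hηξ : η ξ = 1)
    (hD : ∀ X, η X = 0 → η (φ X) = 0) (X : V) : η (φ X) = 0 := by
  have h := hD (X - η X • ξ) (by simp [hηξ])
  rwa [map_sub, map_smul, hφξ, smul_zero, sub_zero] at h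

theorem eta_apply_Q (hφφ : ∀ X, φ (φ X) = -(Q X) + η X • Q ξ) (hηφ : ∀ X, η (φ X) = 0)
    (hηξ : η ξ = 1) (hQξ : Q ξ = ν • ξ) (X : V) : η (Q X) = ν * η X := by
  have h := congrArg η (hφφ X)
  rw [hηφ, map_add, map_neg, map_smul, hQξ, map_smul, hηξ, smul_eq_mul, smul_eq_mul,
    mul_one] at h
  linear_combination h

theorem phi_Q_comm (hφφ : ∀ X, φ (φ X) = -(Q X) + η X • Q ξ) (hηφ : ∀ X, η (φ X) = 0)
    (hφξ : φ ξ = 0) (hQξ : Q ξ = ν • ξ) (X : V) : φ (Q X) = Q (φ X) := by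
  have h := congrArg φ (hφφ X)
  rw [hφφ, hηφ, zero_smul, add_zero, map_add, map_neg, map_smul, hQξ, map_smul, hφξ,
    smul_zero, smul_zero, add_zero] at h
  exact (neg_injective h).symm

end Module

section InnerProductSpace

variable {V : Type*} [NormedAddCommGroup V] [InnerProductSpace ℝ V]
  {φ Q : V →ₗ[ℝ] V} {ξ : V} {η : V →ₗ[ℝ] ℝ} {ν : ℝ}

theorem isSymmetric_Q (hηQ : ∀ X, η (Q X) = ν * η X)
    (hcompat : ∀ X Y, ⟪φ X, φ Y⟫ = ⟪X, Q Y⟫ - η X * η (Q Y)) : Q.IsSymmetric := by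
  intro X Y
  have hXY := hcompat X Y
  have hYX := hcompat Y X
  rw [real_inner_comm (φ X), hηQ] at hYX
  rw [hηQ] at hXY
  rw [real_inner_comm Y (Q X)]
  linarith

theorem eta_apply_eq_inner (hQ : Function.Surjective Q) (hφξ : φ ξ = 0) (hηξ : η ξ = 1)
    (hcompat : ∀ X Y, ⟪φ X, φ Y⟫ = ⟪X, Q Y⟫ - η X * η (Q Y)) (W : V) : η W = ⟪ξ, W⟫ := by
  obtain ⟨Y, rfl⟩ := hQ W
  have h := hcompat ξ Y
  rw [hφξ, inner_zero_left, hηξ, one_mul] at h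
  linarith

theorem inner_phi_left (hQ : Function.Surjective Q) (hQsym : Q.IsSymmetric)
    (hφQ : ∀ X, φ (Q X) = Q (φ X)) (hφφ : ∀ X, φ (φ X) = -(Q X) + η X • Q ξ)
    (hηφ : ∀ X, η (φ X) = 0) (hη : ∀ W, η W = ⟪ξ, W⟫)
    (hcompat : ∀ X Y, ⟪φ X, φ Y⟫ = ⟪X, Q Y⟫ - η X * η (Q Y)) (X Y : V) :
    ⟪φ X, Y⟫ = -⟪X, φ Y⟫ := by
  obtain ⟨Z, rfl⟩ := hQ Y
  have hξ : ⟪Q ξ, φ Z⟫ = 0 := by rw [hQsym, ← hφQ, ← hη, hηφ]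
  calc ⟪φ X, Q Z⟫ = ⟪φ (φ X), φ Z⟫ := by rw [hcompat, hηφ, zero_mul, sub_zero]
    _ = -⟪Q X, φ Z⟫ := by
      rw [hφφ, inner_add_left, inner_neg_left, real_inner_smul_left, hξ, mul_zero, add_zero]
    _ = -⟪X, φ (Q Z)⟫ := by rw [hQsym, hφQ]

end InnerProductSpace

end WeakAlmostContact

open WeakAlmostContact in
theorem weak_almost_contact_metric_skew_selfadjoint_general
    {V : Type*} [NormedAddCommGroup V] [InnerProductSpace ℝ V]
    (φ Q : V →ₗ[ℝ] V) (hQ : Function.Bijective Q)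
    (ξ : V) (η : V →ₗ[ℝ] ℝ) (ν : ℝ)
    (hφφ : ∀ X, φ (φ X) = -(Q X) + η X • Q ξ)
    (hηξ : η ξ = 1)
    (hQξ : Q ξ = ν • ξ)
    (hD : ∀ X, η X = 0 → η (φ X) = 0)
    (hcompat : ∀ X Y, ⟪φ X, φ Y⟫ = ⟪X, Q Y⟫ - η X * η (Q Y))
    :
    (∀ X Y, ⟪φ X, Y⟫ = -⟪X, φ Y⟫) ∧ (∀ X Y, ⟪Q X, Y⟫ = ⟪X, Q Y⟫) := by
  have hφξ := apply_xi_eq_zero hQ.injective hφφ hηξ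
  have hηφ := eta_apply_phi_eq_zero hφξ hηξ hD
  have hQsym := isSymmetric_Q (eta_apply_Q hφφ hηφ hηξ hQξ) hcompat
  exact ⟨inner_phi_left hQ.surjective hQsym (phi_Q_comm hφφ hηφ hφξ hQξ) hφφ hηφ
    (eta_apply_eq_inner hQ.surjective hφξ hηξ hcompat) hcompat, hQsym⟩

theorem weak_almost_contact_metric_skew_selfadjoint
    {V : Type*} [NormedAddCommGroup V] [InnerProductSpace ℝ V] [FiniteDimensional ℝ V]
    (φ Q : V →ₗ[ℝ] V) (hQ : Function.Bijective Q)
    (ξ : V) (η : V →ₗ[ℝ] ℝ) (ν : ℝ) (hν : 0 < ν)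
    (hφφ : ∀ X, φ (φ X) = -(Q X) + η X • Q ξ)
    (hηξ : η ξ = 1)
    (hQξ : Q ξ = ν • ξ)
    (hD : ∀ X, η X = 0 → η (φ X) = 0)
    (hcompat : ∀ X Y, ⟪φ X, φ Y⟫ = ⟪X, Q Y⟫ - η X * η (Q Y))
    :
    (∀ X Y, ⟪φ X, Y⟫ = -⟪X, φ Y⟫) ∧ (∀ X Y, ⟪Q X, Y⟫ = ⟪X, Q Y⟫) :=
  weak_almost_contact_metric_skew_selfadjoint_general φ Q hQ ξ η ν hφφ hηξ hQξ hD hcompat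
end

section
/- For a weak almost contact metric structure (φ,Q,ξ,η,g) on a real vector space V, the 1-form η is dual to ξ via g: η(X) = g(X,ξ) for all X ∈ V; in particular ξ is g-orthogonal to D = ker η. -/
open scoped RealInnerProductSpace

noncomputable section

theorem weak_almost_contact_metric_eta_dual
    {V : Type*} [NormedAddCommGroup V] [InnerProductSpace ℝ V]
    (φ Q : V →ₗ[ℝ] V) (hQ : Function.Bijective Q)
    (ξ : V) (η : V →ₗ[ℝ] ℝ) (ν : ℝ) (hν : 0 < ν)
    (hφφ : ∀ X, φ (φ X) = -(Q X) + η X • Q ξ)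
    (hηξ : η ξ = 1)
    (hQξ : Q ξ = ν • ξ)
    (hD : ∀ X, η X = 0 → η (φ X) = 0)
    (hcompat : ∀ X Y, ⟪φ X, φ Y⟫ = ⟪X, Q Y⟫ - η X * η (Q Y))
    :
    (∀ X, η X = ⟪X, ξ⟫) ∧ (∀ X, η X = 0 → ⟪X, ξ⟫ = 0) := by
  have hξne : ξ ≠ 0 := by
    intro h
    rw [h, map_zero] at hηξ
    exact one_ne_zero hηξ.symm
  -- φ²ξ = 0
  have hφφξ : φ (φ ξ) = 0 := by
    rw [hφφ, hηξ, one_smul]; abel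
  -- Q (φ ξ) = η(φξ) • Q ξ
  have h1 : Q (φ ξ) = η (φ ξ) • Q ξ := by
    have h := hφφ (φ ξ)
    rw [hφφξ, eq_comm, map_zero, neg_add_eq_zero] at h
    exact h
  have h2 : φ ξ = η (φ ξ) • ξ := by
    apply hQ.injective
    rw [h1, map_smul]
  -- φ²ξ = η(φξ)² • ξ = 0 ⇒ η(φξ) = 0 ⇒ φ ξ = 0
  have h3 : η (φ ξ) = 0 := by
    have : (η (φ ξ) * η (φ ξ)) • ξ = 0 := by
      rw [mul_smul]
      calc (η (φ ξ)) • (η (φ ξ)) • ξ = (η (φ ξ)) • φ ξ := by rw [← h2]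
        _ = φ ((η (φ ξ)) • ξ) := by rw [map_smul]
        _ = φ (φ ξ) := by rw [← h2]
        _ = 0 := hφφξ
    have hm : η (φ ξ) * η (φ ξ) = 0 := by
      by_contra hne
      exact hξne ((smul_eq_zero.mp this).resolve_left hne)
    exact mul_self_eq_zero.mp hm
  have hφξ : φ ξ = 0 := by rw [h2, h3, zero_smul]
  have key : ∀ X, η X = ⟪X, ξ⟫ := by
    intro X
    have := hcompat X ξ
    rw [hφξ, inner_zero_right, hQξ, map_smul, hηξ, real_inner_smul_right] at this
    have : ν * ⟪X, ξ⟫ - η X * (ν * 1) = 0 := this.symm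
    have hmul : ν * (⟪X, ξ⟫ - η X) = 0 := by ring_nf; linarith [this]
    have := (mul_eq_zero.mp hmul).resolve_left (ne_of_gt hν)
    linarith [this]
  exact ⟨key, fun X hX => by rw [← key X, hX]⟩
end
end

section
/- Let (φ,Q,ξ,η) be a weak almost contact structure on a real vector space V such that Q X = λ·X for all X ∈ D = ker η, where λ > 0 is a real constant. Then the endomorphism φ' := λ^{-1/2}·φ satisfies φ'(φ'X) = -X + η(X)·ξ for all X ∈ V; that is, (φ',ξ,η) is an almost contact structure on V. -/
noncomputable section

theorem weak_almost_contact_rescaled_is_almost_contact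
    {V : Type*} [AddCommGroup V] [Module ℝ V]
    (φ Q : V →ₗ[ℝ] V) (hQ : Function.Bijective Q)
    (ξ : V) (η : V →ₗ[ℝ] ℝ) (ν : ℝ) (hν : 0 < ν)
    (hφφ : ∀ X, φ (φ X) = -(Q X) + η X • Q ξ)
    (hηξ : η ξ = 1)
    (hQξ : Q ξ = ν • ξ)
    (hD : ∀ X, η X = 0 → η (φ X) = 0)
    (l : ℝ) (hl : 0 < l) (hQD : ∀ X, η X = 0 → Q X = l • X)
    :
    ∀ X, (Real.sqrt l)⁻¹ • φ ((Real.sqrt l)⁻¹ • φ X) = -X + η X • ξ := by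
  intro X
  have h1 : η (X - η X • ξ) = 0 := by simp [hηξ]
  have h2 : Q (X - η X • ξ) = l • (X - η X • ξ) := hQD _ h1
  have hQX : Q X = l • (X - η X • ξ) + η X • Q ξ := by
    rw [← h2]; simp
  have hkey : φ (φ X) = -(l • X) + (l * η X) • ξ := by
    rw [hφφ, hQX]
    simp [smul_sub, mul_smul]
    abel
  have hs : (Real.sqrt l)⁻¹ * (Real.sqrt l)⁻¹ = l⁻¹ := by
    rw [← mul_inv, Real.mul_self_sqrt hl.le]
  rw [map_smul, smul_smul, hs, hkey]
  rw [smul_add, smul_neg, smul_smul, smul_smul,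
    inv_mul_cancel₀ hl.ne', ← mul_assoc, inv_mul_cancel₀ hl.ne']
  simp
end
end

section
/- Let (φ,Q,ξ,η,g) be a weak almost contact metric structure on a real vector space V such that Q X = λ·X for all X ∈ D = ker η, where λ > 0 is a real constant. Define φ' := λ^{-1/2}·φ and the bilinear form g'(X,Y) := λ^{1/2}·(g(X,Y) - η(X)η(Y)) + η(X)η(Y). Then g' is an inner product on V, η(X) = g'(X,ξ), g'(φ'X,φ'Y) = g'(X,Y) - η(X)η(Y) for all X,Y ∈ V (so g' is compatible with the almost contact structure (φ',ξ,η)), and moreover g'(X,φ'Y) = g(X,φY) for all X,Y ∈ V. -/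
open scoped RealInnerProductSpace

noncomputable section

/-!
`Q` is `l` on `ker η` and `ν` on `ξ`, hence injective, which forces `φ ξ = 0`. Compatibility with
`Y = ξ` then gives `g X ξ = η X`, so `ξ` is a unit normal to `ker η`, and compatibility in general
reads `g (φ X) (φ Y) = l (g X Y - η X η Y)`. Scaling `g` by `√l` on `ker η` and `φ` by `1/√l` turns
the factor `l` into `1`.
-/

section LinearAlgebra

variable {V : Type*} [AddCommGroup V] [Module ℝ V] {φ Q : V →ₗ[ℝ] V} {ξ : V}
  {η : V →ₗ[ℝ] ℝ} {ν l : ℝ}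

lemma map_sub_map_smul_eq_zero (hηξ : η ξ = 1) (X : V) : η (X - η X • ξ) = 0 := by
  simp [hηξ]

lemma apply_eq_smul_add_smul (hηξ : η ξ = 1) (hQξ : Q ξ = ν • ξ)
    (hQD : ∀ X, η X = 0 → Q X = l • X) (X : V) :
    Q X = l • X + ((ν - l) * η X) • ξ := by
  have hsplit : Q X = Q (X - η X • ξ) + η X • Q ξ := by
    rw [← map_smul, ← map_add, sub_add_cancel]
  rw [hsplit, hQD _ (map_sub_map_smul_eq_zero hηξ X), hQξ]
  module

lemma injective_of_smul_on_ker (hηξ : η ξ = 1) (hQξ : Q ξ = ν • ξ)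
    (hQD : ∀ X, η X = 0 → Q X = l • X) (hν : ν ≠ 0) (hl : l ≠ 0) :
    Function.Injective Q := by
  refine (injective_iff_map_eq_zero Q).mpr fun X hX => ?_
  have hQX := apply_eq_smul_add_smul hηξ hQξ hQD X
  have hηX : η X = 0 := by
    have := congrArg η hQX
    simp only [hX, map_zero, map_add, map_smul, hηξ, smul_eq_mul] at this
    exact (mul_eq_zero.mp (by linarith : ν * η X = 0)).resolve_left hν
  rw [hX, hηX, mul_zero, zero_smul, add_zero] at hQX
  exact (smul_eq_zero.mp hQX.symm).resolve_left hl

/-- `φ² ξ = 0`, so `Q (φ ξ)` is a multiple of `Q ξ`,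
hence `φ ξ = c • ξ`, and then `c² • ξ = φ² ξ = 0`. -/
lemma map_xi_eq_zero (hQ : Function.Injective Q) (hφφ : ∀ X, φ (φ X) = -(Q X) + η X • Q ξ)
    (hηξ : η ξ = 1) : φ ξ = 0 := by
  have hφφξ : φ (φ ξ) = 0 := by rw [hφφ, hηξ, one_smul, neg_add_cancel]
  set c := η (φ ξ)
  have hφξ : φ ξ = c • ξ := hQ <| by
    have := hφφ (φ ξ)
    rw [hφφξ, map_zero] at this
    rw [map_smul]
    linear_combination (norm := module) this
  have hξ : ξ ≠ 0 := by rintro rfl; simp at hηξ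
  have hcc : (c * c) • ξ = 0 := by rw [← smul_smul, ← hφξ, ← map_smul, ← hφξ, hφφξ]
  have hc : c = 0 := mul_self_eq_zero.mp ((smul_eq_zero.mp hcc).resolve_right hξ)
  rw [hφξ, hc, zero_smul]

lemma apply_map_eq_zero (hD : ∀ X, η X = 0 → η (φ X) = 0) (hηξ : η ξ = 1) (hφξ : φ ξ = 0)
    (X : V) : η (φ X) = 0 := by
  have := hD _ (map_sub_map_smul_eq_zero hηξ X)
  rwa [map_sub, map_smul, hφξ, smul_zero, sub_zero] at this

end LinearAlgebra

section Metric

variable {V : Type*} [NormedAddCommGroup V] [InnerProductSpace ℝ V] {φ Q : V →ₗ[ℝ] V} {ξ : V}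
  {η : V →ₗ[ℝ] ℝ} {ν l : ℝ}

lemma inner_xi_right (hcompat : ∀ X Y, ⟪φ X, φ Y⟫ = ⟪X, Q Y⟫ - η X * η (Q Y))
    (hφξ : φ ξ = 0) (hηξ : η ξ = 1) (hQξ : Q ξ = ν • ξ) (hν : ν ≠ 0) (X : V) :
    ⟪X, ξ⟫ = η X := by
  have h := hcompat X ξ
  rw [hφξ, inner_zero_right, hQξ, real_inner_smul_right, map_smul, hηξ, smul_eq_mul,
    mul_one] at h
  exact mul_left_cancel₀ hν (by linarith)

lemma inner_map_map_eq (hcompat : ∀ X Y, ⟪φ X, φ Y⟫ = ⟪X, Q Y⟫ - η X * η (Q Y))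
    (hξ : ∀ X, ⟪X, ξ⟫ = η X) (hηξ : η ξ = 1)
    (hQ : ∀ X, Q X = l • X + ((ν - l) * η X) • ξ) (X Y : V) :
    ⟪φ X, φ Y⟫ = l * (⟪X, Y⟫ - η X * η Y) := by
  rw [hcompat, hQ, inner_add_right, real_inner_smul_right, real_inner_smul_right, hξ,
    map_add, map_smul, map_smul, hηξ, smul_eq_mul, smul_eq_mul]
  ring

lemma inner_self_sub_mul_self_eq (hξ : ∀ X, ⟪X, ξ⟫ = η X) (hηξ : η ξ = 1) (X : V) :
    ⟪X, X⟫ - η X * η X = ‖X - η X • ξ‖ ^ 2 := by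
  have hξ' : ⟪ξ, X⟫ = η X := by rw [real_inner_comm, hξ]
  rw [← real_inner_self_eq_norm_sq]
  simp only [inner_sub_left, inner_sub_right, real_inner_smul_left, real_inner_smul_right, hξ,
    hξ', map_smul, hηξ, smul_eq_mul]
  ring

def rescaledInner (l : ℝ) (η : V →ₗ[ℝ] ℝ) (X Y : V) : ℝ :=
  √l * (⟪X, Y⟫ - η X * η Y) + η X * η Y

lemma rescaledInner_comm (X Y : V) : rescaledInner l η X Y = rescaledInner l η Y X := by
  rw [rescaledInner, rescaledInner, real_inner_comm, mul_comm (η X)]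

lemma rescaledInner_self_pos (hl : 0 < l) (hξ : ∀ X, ⟪X, ξ⟫ = η X) (hηξ : η ξ = 1) {X : V}
    (hX : X ≠ 0) : 0 < rescaledInner l η X X := by
  have hsl : 0 < √l := Real.sqrt_pos.mpr hl
  unfold rescaledInner
  rcases eq_or_ne (η X) 0 with hηX | hηX
  · rw [hηX, mul_zero, sub_zero, add_zero]
    exact mul_pos hsl (real_inner_self_pos.mpr hX)
  · rw [inner_self_sub_mul_self_eq hξ hηξ]
    exact add_pos_of_nonneg_of_pos (by positivity) (mul_self_pos.mpr hηX)

lemma rescaledInner_xi_right (hξ : ∀ X, ⟪X, ξ⟫ = η X) (hηξ : η ξ = 1) (X : V) :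
    rescaledInner l η X ξ = η X := by
  rw [rescaledInner, hξ, hηξ]
  ring

lemma rescaledInner_smul_map_smul_map (hl : 0 < l) (hηφ : ∀ X, η (φ X) = 0)
    (hφφ : ∀ X Y, ⟪φ X, φ Y⟫ = l * (⟪X, Y⟫ - η X * η Y)) (X Y : V) :
    rescaledInner l η ((√l)⁻¹ • φ X) ((√l)⁻¹ • φ Y) = rescaledInner l η X Y - η X * η Y := by
  have hsl : √l ≠ 0 := (Real.sqrt_pos.mpr hl).ne'
  simp only [rescaledInner, real_inner_smul_left, real_inner_smul_right, map_smul, hηφ, hφφ,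
    smul_eq_mul, mul_zero, sub_zero, add_zero]
  field_simp
  rw [add_sub_cancel_right, ← mul_assoc, Real.mul_self_sqrt hl.le]

lemma rescaledInner_smul_map_right (hl : 0 < l) (hηφ : ∀ X, η (φ X) = 0) (X Y : V) :
    rescaledInner l η X ((√l)⁻¹ • φ Y) = ⟪X, φ Y⟫ := by
  have hsl : √l ≠ 0 := (Real.sqrt_pos.mpr hl).ne'
  simp only [rescaledInner, real_inner_smul_right, map_smul, hηφ, smul_eq_mul, mul_zero,
    sub_zero, add_zero]
  field_simp

end Metric

theorem weak_almost_contact_metric_rescaled_structure_general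
    {V : Type*} [NormedAddCommGroup V] [InnerProductSpace ℝ V]
    (φ Q : V →ₗ[ℝ] V)
    (ξ : V) (η : V →ₗ[ℝ] ℝ) (ν : ℝ) (hν : 0 < ν)
    (hφφ : ∀ X, φ (φ X) = -(Q X) + η X • Q ξ)
    (hηξ : η ξ = 1)
    (hQξ : Q ξ = ν • ξ)
    (hD : ∀ X, η X = 0 → η (φ X) = 0)
    (hcompat : ∀ X Y, ⟪φ X, φ Y⟫ = ⟪X, Q Y⟫ - η X * η (Q Y))
    (l : ℝ) (hl : 0 < l) (hQD : ∀ X, η X = 0 → Q X = l • X)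
    :
    (∀ X Y, Real.sqrt l * (⟪X, Y⟫ - η X * η Y) + η X * η Y =
      Real.sqrt l * (⟪Y, X⟫ - η Y * η X) + η Y * η X) ∧
    (∀ X, X ≠ 0 → 0 < Real.sqrt l * (⟪X, X⟫ - η X * η X) + η X * η X) ∧
    (∀ X, η X = Real.sqrt l * (⟪X, ξ⟫ - η X * η ξ) + η X * η ξ) ∧
    (∀ X Y, Real.sqrt l * (⟪(Real.sqrt l)⁻¹ • φ X, (Real.sqrt l)⁻¹ • φ Y⟫ -
        η ((Real.sqrt l)⁻¹ • φ X) * η ((Real.sqrt l)⁻¹ • φ Y)) +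
        η ((Real.sqrt l)⁻¹ • φ X) * η ((Real.sqrt l)⁻¹ • φ Y) =
      (Real.sqrt l * (⟪X, Y⟫ - η X * η Y) + η X * η Y) - η X * η Y) ∧
    (∀ X Y, Real.sqrt l * (⟪X, (Real.sqrt l)⁻¹ • φ Y⟫ - η X * η ((Real.sqrt l)⁻¹ • φ Y)) +
        η X * η ((Real.sqrt l)⁻¹ • φ Y) = ⟪X, φ Y⟫) := by
  have hQ := apply_eq_smul_add_smul hηξ hQξ hQD
  have hφξ : φ ξ = 0 :=
    map_xi_eq_zero (injective_of_smul_on_ker hηξ hQξ hQD hν.ne' hl.ne') hφφ hηξ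
  have hξ := inner_xi_right hcompat hφξ hηξ hQξ hν.ne'
  have hηφ := apply_map_eq_zero hD hηξ hφξ
  have hφφ' := inner_map_map_eq hcompat hξ hηξ hQ
  exact ⟨rescaledInner_comm, fun X hX => rescaledInner_self_pos hl hξ hηξ hX,
    fun X => (rescaledInner_xi_right hξ hηξ X).symm,
    rescaledInner_smul_map_smul_map hl hηφ hφφ', rescaledInner_smul_map_right hl hηφ⟩

theorem weak_almost_contact_metric_rescaled_structure
    {V : Type*} [NormedAddCommGroup V] [InnerProductSpace ℝ V]
    (φ Q : V →ₗ[ℝ] V) (hQ : Function.Bijective Q)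
    (ξ : V) (η : V →ₗ[ℝ] ℝ) (ν : ℝ) (hν : 0 < ν)
    (hφφ : ∀ X, φ (φ X) = -(Q X) + η X • Q ξ)
    (hηξ : η ξ = 1)
    (hQξ : Q ξ = ν • ξ)
    (hD : ∀ X, η X = 0 → η (φ X) = 0)
    (hcompat : ∀ X Y, ⟪φ X, φ Y⟫ = ⟪X, Q Y⟫ - η X * η (Q Y))
    (l : ℝ) (hl : 0 < l) (hQD : ∀ X, η X = 0 → Q X = l • X)
    :
    (∀ X Y, Real.sqrt l * (⟪X, Y⟫ - η X * η Y) + η X * η Y =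
      Real.sqrt l * (⟪Y, X⟫ - η Y * η X) + η Y * η X) ∧
    (∀ X, X ≠ 0 → 0 < Real.sqrt l * (⟪X, X⟫ - η X * η X) + η X * η X) ∧
    (∀ X, η X = Real.sqrt l * (⟪X, ξ⟫ - η X * η ξ) + η X * η ξ) ∧
    (∀ X Y, Real.sqrt l * (⟪(Real.sqrt l)⁻¹ • φ X, (Real.sqrt l)⁻¹ • φ Y⟫ -
        η ((Real.sqrt l)⁻¹ • φ X) * η ((Real.sqrt l)⁻¹ • φ Y)) +
        η ((Real.sqrt l)⁻¹ • φ X) * η ((Real.sqrt l)⁻¹ • φ Y) =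
      (Real.sqrt l * (⟪X, Y⟫ - η X * η Y) + η X * η Y) - η X * η Y) ∧
    (∀ X Y, Real.sqrt l * (⟪X, (Real.sqrt l)⁻¹ • φ Y⟫ - η X * η ((Real.sqrt l)⁻¹ • φ Y)) +
        η X * η ((Real.sqrt l)⁻¹ • φ Y) = ⟪X, φ Y⟫) :=
  weak_almost_contact_metric_rescaled_structure_general φ Q ξ η ν hν hφφ hηξ hQξ hD hcompat l hl hQD
end
end

section
/- Let (φ,Q,ξ,η,g) be a weak almost contact metric structure on M for which N⁽¹⁾(X,Y) = 0 for all smooth vector fields X,Y. Then dη(X,ξ) = 0 for every smooth vector field X; equivalently, the tensor N⁽⁴⁾(X) := ξ(η(X)) - η([ξ,X]) vanishes identically. -/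
open scoped Manifold

noncomputable section

/-- Smooth vector fields on a manifold `M`, modelled as derivations of the algebra of smooth
real-valued functions on `M`. -/
abbrev VectorField {E : Type*} [NormedAddCommGroup E] [NormedSpace ℝ E]
    {H : Type*} [TopologicalSpace H] (I : ModelWithCorners ℝ E H)
    (M : Type*) [TopologicalSpace M] [ChartedSpace H M] :=
  Derivation ℝ C^(⊤ : ℕ∞)⟮I, M; ℝ⟯ C^(⊤ : ℕ∞)⟮I, M; ℝ⟯

variable {E : Type*} [NormedAddCommGroup E] [NormedSpace ℝ E]
  {H : Type*} [TopologicalSpace H] {I : ModelWithCorners ℝ E H}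
  {M : Type*} [TopologicalSpace M] [ChartedSpace H M]

/-- `dη(X,Y) = ½ (X(η(Y)) - Y(η(X)) - η([X,Y]))`. -/
def dEta (η : VectorField I M →ₗ[C^(⊤ : ℕ∞)⟮I, M; ℝ⟯] C^(⊤ : ℕ∞)⟮I, M; ℝ⟯)
    (X Y : VectorField I M) : C^(⊤ : ℕ∞)⟮I, M; ℝ⟯ :=
  (2 : ℝ)⁻¹ • (X (η Y) - Y (η X) - η ⁅X, Y⁆)

/-- The Nijenhuis torsion `[φ,φ](X,Y) = φ²[X,Y] + [φX,φY] - φ[φX,Y] - φ[X,φY]`. -/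
def nijenhuis (φ : VectorField I M → VectorField I M) (X Y : VectorField I M) :
    VectorField I M :=
  φ (φ ⁅X, Y⁆) + ⁅φ X, φ Y⁆ - φ ⁅φ X, Y⁆ - φ ⁅X, φ Y⁆

/-- `N⁽¹⁾(X,Y) = [φ,φ](X,Y) + 2 dη(X,Y) Qξ`. -/
def N1 (φ Q : VectorField I M →ₗ[C^(⊤ : ℕ∞)⟮I, M; ℝ⟯] VectorField I M)
    (ξ : VectorField I M) (η : VectorField I M →ₗ[C^(⊤ : ℕ∞)⟮I, M; ℝ⟯] C^(⊤ : ℕ∞)⟮I, M; ℝ⟯)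
    (X Y : VectorField I M) : VectorField I M :=
  nijenhuis ⇑φ X Y + ((2 : ℝ) • dEta η X Y) • Q ξ

/-- `N⁽²⁾(X,Y) = (φX)(η(Y)) - η([φX,Y]) - (φY)(η(X)) + η([φY,X])`. -/
def N2 (φ : VectorField I M →ₗ[C^(⊤ : ℕ∞)⟮I, M; ℝ⟯] VectorField I M)
    (η : VectorField I M →ₗ[C^(⊤ : ℕ∞)⟮I, M; ℝ⟯] C^(⊤ : ℕ∞)⟮I, M; ℝ⟯)
    (X Y : VectorField I M) : C^(⊤ : ℕ∞)⟮I, M; ℝ⟯ :=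
  (φ X) (η Y) - η ⁅φ X, Y⁆ - (φ Y) (η X) + η ⁅φ Y, X⁆

/-!
Since `φ² = -Q + η ⊗ Qξ` and `Q` is injective, `φ²W = 0` forces `W = η(W) ξ`. Applied to
`W = φξ` (note `φ²ξ = 0`) this gives `φξ = η(φξ) ξ`, hence `η(φξ)² = 0` and `φξ = 0`.
Then `N⁽¹⁾(X, ξ) = φW + 2 dη(X, ξ) Qξ` with `W = φ[X, ξ] - [φX, ξ]`. As `φQξ = νφξ = 0`, its
vanishing gives `φ²W = 0`, so `W` is a multiple of `ξ` and `φW = 0`, leaving `2 dη(X, ξ) Qξ = 0`;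
injectivity of `Q` and `η(ξ) = 1` give `dη(X, ξ) = 0`, and `η(ξ) = 1` also turns
`-2 dη(X, ξ)` into `ξ(η(X)) - η([ξ, X])`.
-/

namespace WeakAlmostContact

variable {R V : Type*} [CommRing R] [AddCommGroup V] [Module R V]
  {φ Q : V →ₗ[R] V} {ξ : V} {η : V →ₗ[R] R}

theorem eq_smul_reeb_of_apply_apply_eq_zero (hφφ : ∀ X, φ (φ X) = -(Q X) + η X • Q ξ)
    (hQ : Function.Injective Q) {W : V} (hW : φ (φ W) = 0) : W = η W • ξ := by
  refine hQ ?_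
  rw [map_smul, ← neg_add_eq_zero, ← hφφ, hW]

theorem apply_reeb_eq_zero [IsReduced R] (hφφ : ∀ X, φ (φ X) = -(Q X) + η X • Q ξ)
    (hηξ : η ξ = 1) (hQ : Function.Injective Q) : φ ξ = 0 := by
  have hφφξ : φ (φ ξ) = 0 := by rw [hφφ, hηξ, one_smul, neg_add_cancel]
  have hφξ : φ ξ = η (φ ξ) • ξ :=
    eq_smul_reeb_of_apply_apply_eq_zero hφφ hQ (by rw [hφφξ, map_zero])
  have hsq : η (φ ξ) ^ 2 = 0 :=
    calc η (φ ξ) ^ 2 = η (η (φ ξ) • η (φ ξ) • ξ) := by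
          rw [map_smul, map_smul, hηξ, smul_eq_mul, smul_eq_mul, mul_one, sq]
      _ = η (φ (φ ξ)) := by rw [← hφξ, ← map_smul, ← hφξ]
      _ = 0 := by rw [hφφξ, map_zero]
  rw [hφξ, IsReduced.eq_zero _ ⟨2, hsq⟩, zero_smul]

theorem eq_zero_of_apply_add_smul_eq_zero (hφφ : ∀ X, φ (φ X) = -(Q X) + η X • Q ξ)
    (hηξ : η ξ = 1) (hQ : Function.Injective Q) (hφξ : φ ξ = 0) (hφQξ : φ (Q ξ) = 0)
    {W : V} {c : R} (h : φ W + c • Q ξ = 0) : c = 0 := by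
  have hφW : φ W = -(c • Q ξ) := eq_neg_of_add_eq_zero_left h
  have hW : W = η W • ξ := eq_smul_reeb_of_apply_apply_eq_zero hφφ hQ <| by
    rw [hφW, map_neg, map_smul, hφQξ, smul_zero, neg_zero]
  have hcξ : c • ξ = 0 := by
    refine hQ ?_
    rw [map_smul, map_zero, ← neg_eq_zero, ← hφW, hW, map_smul, hφξ, smul_zero]
  rw [← mul_one c, ← hηξ, ← smul_eq_mul, ← map_smul, hcξ, map_zero]

end WeakAlmostContact

instance : IsReduced C^(⊤ : ℕ∞)⟮I, M; ℝ⟯ :=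
  isReduced_of_injective ContMDiffMap.coeFnRingHom ContMDiffMap.coe_injective

theorem N1_right_of_apply_eq_zero
    {φ Q : VectorField I M →ₗ[C^(⊤ : ℕ∞)⟮I, M; ℝ⟯] VectorField I M} {ξ : VectorField I M}
    {η : VectorField I M →ₗ[C^(⊤ : ℕ∞)⟮I, M; ℝ⟯] C^(⊤ : ℕ∞)⟮I, M; ℝ⟯} (hφξ : φ ξ = 0)
    (X : VectorField I M) :
    N1 φ Q ξ η X ξ = φ (φ ⁅X, ξ⁆ - ⁅φ X, ξ⁆) + ((2 : ℝ) • dEta η X ξ) • Q ξ := by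
  have hlie (Y : VectorField I M) : ⁅Y, φ ξ⁆ = 0 := by rw [hφξ]; exact lie_zero Y
  rw [N1, nijenhuis, hlie, hlie, map_zero, map_sub]
  abel

theorem two_smul_dEta_right_of_eq_one
    {η : VectorField I M →ₗ[C^(⊤ : ℕ∞)⟮I, M; ℝ⟯] C^(⊤ : ℕ∞)⟮I, M; ℝ⟯} {ξ : VectorField I M}
    (hηξ : η ξ = 1) (X : VectorField I M) :
    (2 : ℝ) • dEta η X ξ = -(ξ (η X) - η ⁅ξ, X⁆) := by
  rw [dEta, smul_smul, mul_inv_cancel₀ two_ne_zero, one_smul, hηξ, Derivation.map_one_eq_zero,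
    ← lie_skew, map_neg]
  abel

theorem weak_normal_implies_N4_vanishes_general
    (φ Q : VectorField I M →ₗ[C^(⊤ : ℕ∞)⟮I, M; ℝ⟯] VectorField I M)
    (hQ : Function.Bijective Q)
    (ξ : VectorField I M)
    (η : VectorField I M →ₗ[C^(⊤ : ℕ∞)⟮I, M; ℝ⟯] C^(⊤ : ℕ∞)⟮I, M; ℝ⟯)
    (ν : ℝ)
    (hφφ : ∀ X, φ (φ X) = -(Q X) + η X • Q ξ)
    (hηξ : η ξ = 1)
    (hQξ : Q ξ = ν • ξ)
    (hN1 : ∀ X Y, N1 φ Q ξ η X Y = 0)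
    :
    (∀ X, dEta η X ξ = 0) ∧ (∀ X, ξ (η X) - η ⁅ξ, X⁆ = 0) := by
  have hφξ : φ ξ = 0 := WeakAlmostContact.apply_reeb_eq_zero hφφ hηξ hQ.injective
  have hφQξ : φ (Q ξ) = 0 := by rw [hQξ, φ.map_smul_of_tower, hφξ, smul_zero]
  have hdη (X : VectorField I M) : dEta η X ξ = 0 := by
    have h2dη := WeakAlmostContact.eq_zero_of_apply_add_smul_eq_zero hφφ hηξ hQ.injective hφξ hφQξ
      ((N1_right_of_apply_eq_zero hφξ X).symm.trans (hN1 X ξ))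
    exact (smul_eq_zero.mp h2dη).resolve_left two_ne_zero
  refine ⟨hdη, fun X => ?_⟩
  rw [← neg_eq_zero, ← two_smul_dEta_right_of_eq_one hηξ, hdη, smul_zero]

theorem weak_normal_implies_N4_vanishes
    [FiniteDimensional ℝ E] [I.Boundaryless] [IsManifold I (⊤ : ℕ∞) M]
    (n : ℕ) (hn : 1 ≤ n) (hdim : Module.finrank ℝ E = 2 * n + 1)
    (φ Q : VectorField I M →ₗ[C^(⊤ : ℕ∞)⟮I, M; ℝ⟯] VectorField I M)
    (hQ : Function.Bijective Q)
    (ξ : VectorField I M)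
    (η : VectorField I M →ₗ[C^(⊤ : ℕ∞)⟮I, M; ℝ⟯] C^(⊤ : ℕ∞)⟮I, M; ℝ⟯)
    (g : VectorField I M →ₗ[C^(⊤ : ℕ∞)⟮I, M; ℝ⟯] VectorField I M →ₗ[C^(⊤ : ℕ∞)⟮I, M; ℝ⟯] C^(⊤ : ℕ∞)⟮I, M; ℝ⟯)
    (ν : ℝ) (hν : 0 < ν)
    (hφφ : ∀ X, φ (φ X) = -(Q X) + η X • Q ξ)
    (hηξ : η ξ = 1)
    (hQξ : Q ξ = ν • ξ)
    (hD : ∀ X, η X = 0 → η (φ X) = 0)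
    (hg_symm : ∀ X Y, g X Y = g Y X)
    (hg_pos : ∀ X (x : M), 0 ≤ g X X x)
    (hg_def : ∀ X, g X X = 0 → X = 0)
    (hcompat : ∀ X Y, g (φ X) (φ Y) = g X (Q Y) - η X * η (Q Y))
    (hN1 : ∀ X Y, N1 φ Q ξ η X Y = 0)
    :
    (∀ X, dEta η X ξ = 0) ∧ (∀ X, ξ (η X) - η ⁅ξ, X⁆ = 0) :=
  weak_normal_implies_N4_vanishes_general φ Q hQ ξ η ν hφφ hηξ hQξ hN1
end
end

section
/- Let (φ,Q,ξ,η,g) be a weak almost contact metric structure on M for which N⁽¹⁾(X,Y) = 0 for all smooth vector fields X,Y. Then [ξ,φX] = φ[ξ,X] for every smooth vector field X; equivalently, the Lie derivative £_ξφ (the tensor N⁽³⁾) vanishes identically. -/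
open scoped Manifold

noncomputable section

variable {E : Type*} [NormedAddCommGroup E] [NormedSpace ℝ E]
  {H : Type*} [TopologicalSpace H] {I : ModelWithCorners ℝ E H}
  {M : Type*} [TopologicalSpace M] [ChartedSpace H M]

/-!
Smooth functions form a reduced ring, and `η(φX) = η(X) η(φξ)` with `η(φξ)² = η(φ²ξ) = 0`; hence
`η ∘ φ = 0`, and the compatibility of `g` gives `φξ = 0`. Then
`N⁽¹⁾(ξ,Y) = φ(φ[ξ,Y] - [ξ,φY]) + 2 dη(ξ,Y) Qξ`, and applying `η` shows `dη(ξ,·) = 0`. So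
`Z = φ[ξ,Y] - [ξ,φY]` lies in `ker φ`, which is spanned by `ξ` because `Q` is injective, while
`η(Z) = -η[ξ,φY] = 2 dη(ξ,φY) = 0`.
-/

instance {n : WithTop ℕ∞} : IsReduced C^n⟮I, M; ℝ⟯ where
  eq_zero f := fun ⟨k, hk⟩ => by
    ext x
    exact (pow_eq_zero_iff'.mp congr($hk x)).1

namespace WeakAlmostContact

variable {R V : Type*} [CommRing R] [AddCommGroup V] [Module R V]
  {φ Q : V →ₗ[R] V} {ξ : V} {η : V →ₗ[R] R}

theorem phi_phi_xi_eq_zero (hφφ : ∀ X, φ (φ X) = -(Q X) + η X • Q ξ) (hηξ : η ξ = 1) :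
    φ (φ ξ) = 0 := by
  rw [hφφ, hηξ, one_smul, neg_add_cancel]

theorem eta_phi_eq_mul (hηξ : η ξ = 1) (hD : ∀ X, η X = 0 → η (φ X) = 0) (X : V) :
    η (φ X) = η X * η (φ ξ) := by
  have h := hD (X - η X • ξ) (by rw [map_sub, map_smul, hηξ, smul_eq_mul, mul_one, sub_self])
  rwa [map_sub, map_smul, map_sub, map_smul, smul_eq_mul, sub_eq_zero] at h

theorem eta_phi_eq_zero [IsReduced R] (hφφ : ∀ X, φ (φ X) = -(Q X) + η X • Q ξ)
    (hηξ : η ξ = 1) (hD : ∀ X, η X = 0 → η (φ X) = 0) (X : V) : η (φ X) = 0 := by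
  have hsq : η (φ ξ) ^ 2 = 0 := by
    rw [sq, ← eta_phi_eq_mul hηξ hD, phi_phi_xi_eq_zero hφφ hηξ, map_zero]
  rw [eta_phi_eq_mul hηξ hD, IsReduced.eq_zero _ ⟨2, hsq⟩, mul_zero]

theorem phi_xi_eq_zero [IsReduced R] (g : V →ₗ[R] V →ₗ[R] R) (hQ : Function.Surjective Q)
    (hφφ : ∀ X, φ (φ X) = -(Q X) + η X • Q ξ) (hηξ : η ξ = 1)
    (hD : ∀ X, η X = 0 → η (φ X) = 0) (hg_def : ∀ X, g X X = 0 → X = 0)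
    (hcompat : ∀ X Y, g (φ X) (φ Y) = g X (Q Y) - η X * η (Q Y)) :
    φ ξ = 0 := by
  obtain ⟨W, hW⟩ := hQ (φ ξ)
  -- with `QW = φξ`: `g(φξ, φξ) = g(φ²ξ, φW) + η(φξ) η(QW)`, and both terms vanish
  have h := hcompat (φ ξ) W
  rw [phi_phi_xi_eq_zero hφφ hηξ, eta_phi_eq_zero hφφ hηξ hD, map_zero, LinearMap.zero_apply,
    zero_mul, sub_zero, hW] at h
  exact hg_def _ h.symm

theorem eq_eta_smul_xi_of_phi_eq_zero (hQ : Function.Injective Q)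
    (hφφ : ∀ X, φ (φ X) = -(Q X) + η X • Q ξ) {Z : V} (hZ : φ Z = 0) : Z = η Z • ξ := by
  apply hQ
  have h := hφφ Z
  rw [hZ, map_zero, eq_comm, neg_add_eq_zero] at h
  rw [h, map_smul]

end WeakAlmostContact

open WeakAlmostContact

section VectorFields

variable {φ Q : VectorField I M →ₗ[C^(⊤ : ℕ∞)⟮I, M; ℝ⟯] VectorField I M} {ξ : VectorField I M}
  {η : VectorField I M →ₗ[C^(⊤ : ℕ∞)⟮I, M; ℝ⟯] C^(⊤ : ℕ∞)⟮I, M; ℝ⟯}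

theorem two_smul_dEta_xi (hηξ : η ξ = 1) (Y : VectorField I M) :
    (2 : ℝ) • dEta η ξ Y = ξ (η Y) - η ⁅ξ, Y⁆ := by
  rw [dEta, smul_inv_smul₀ two_ne_zero, hηξ, Derivation.map_one_eq_zero, sub_zero]

theorem N1_xi_left (hφξ : φ ξ = 0) (Y : VectorField I M) :
    N1 φ Q ξ η ξ Y = φ (φ ⁅ξ, Y⁆ - ⁅ξ, φ Y⁆) + ((2 : ℝ) • dEta η ξ Y) • Q ξ := by
  -- `rw [zero_lie]` does not see through the bracket instance on derivations
  have zero_bracket : ∀ Z : VectorField I M, ⁅(0 : VectorField I M), Z⁆ = 0 := fun Z => zero_lie Z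
  rw [N1, nijenhuis, hφξ, zero_bracket, zero_bracket, map_zero, map_sub]
  abel

theorem dEta_xi_eq_zero {ν : ℝ} (hν : ν ≠ 0) (hηξ : η ξ = 1) (hQξ : Q ξ = ν • ξ)
    (hφξ : φ ξ = 0) (hηφ : ∀ X, η (φ X) = 0) {Y : VectorField I M}
    (hN1 : N1 φ Q ξ η ξ Y = 0) : dEta η ξ Y = 0 := by
  have h := congrArg η hN1
  rw [N1_xi_left hφξ, map_add, hηφ, zero_add, map_smul, hQξ, LinearMap.map_smul_of_tower, hηξ,
    map_zero, smul_eq_mul, mul_smul_one, smul_smul] at h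
  rw [← inv_smul_smul₀ (mul_ne_zero hν two_ne_zero) (dEta η ξ Y), h, smul_zero]

end VectorFields

theorem weak_normal_implies_N3_vanishes_general
    (φ Q : VectorField I M →ₗ[C^(⊤ : ℕ∞)⟮I, M; ℝ⟯] VectorField I M)
    (hQ : Function.Bijective Q)
    (ξ : VectorField I M)
    (η : VectorField I M →ₗ[C^(⊤ : ℕ∞)⟮I, M; ℝ⟯] C^(⊤ : ℕ∞)⟮I, M; ℝ⟯)
    (g : VectorField I M →ₗ[C^(⊤ : ℕ∞)⟮I, M; ℝ⟯] VectorField I M →ₗ[C^(⊤ : ℕ∞)⟮I, M; ℝ⟯] C^(⊤ : ℕ∞)⟮I, M; ℝ⟯)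
    (ν : ℝ) (hν : 0 < ν)
    (hφφ : ∀ X, φ (φ X) = -(Q X) + η X • Q ξ)
    (hηξ : η ξ = 1)
    (hQξ : Q ξ = ν • ξ)
    (hD : ∀ X, η X = 0 → η (φ X) = 0)
    (hg_def : ∀ X, g X X = 0 → X = 0)
    (hcompat : ∀ X Y, g (φ X) (φ Y) = g X (Q Y) - η X * η (Q Y))
    (hN1 : ∀ X Y, N1 φ Q ξ η X Y = 0)
    :
    ∀ X, ⁅ξ, φ X⁆ = φ ⁅ξ, X⁆ := by
  have hφξ := phi_xi_eq_zero g hQ.2 hφφ hηξ hD hg_def hcompat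
  have hηφ := eta_phi_eq_zero hφφ hηξ hD
  have hdη Y := dEta_xi_eq_zero hν.ne' hηξ hQξ hφξ hηφ (hN1 ξ Y)
  intro X
  have hφZ : φ (φ ⁅ξ, X⁆ - ⁅ξ, φ X⁆) = 0 := by
    simpa only [N1_xi_left hφξ, hdη, smul_zero, zero_smul, add_zero] using hN1 ξ X
  have hηZ : η (φ ⁅ξ, X⁆ - ⁅ξ, φ X⁆) = 0 := by
    have h := two_smul_dEta_xi hηξ (φ X)
    rw [hdη, hηφ, map_zero, smul_zero, zero_sub, eq_comm, neg_eq_zero] at h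
    rw [map_sub, hηφ, h, sub_zero]
  have hZ := eq_eta_smul_xi_of_phi_eq_zero hQ.1 hφφ hφZ
  rw [hηZ, zero_smul, sub_eq_zero] at hZ
  exact hZ.symm

theorem weak_normal_implies_N3_vanishes
    [FiniteDimensional ℝ E] [I.Boundaryless] [IsManifold I (⊤ : ℕ∞) M]
    (n : ℕ) (hn : 1 ≤ n) (hdim : Module.finrank ℝ E = 2 * n + 1)
    (φ Q : VectorField I M →ₗ[C^(⊤ : ℕ∞)⟮I, M; ℝ⟯] VectorField I M)
    (hQ : Function.Bijective Q)
    (ξ : VectorField I M)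
    (η : VectorField I M →ₗ[C^(⊤ : ℕ∞)⟮I, M; ℝ⟯] C^(⊤ : ℕ∞)⟮I, M; ℝ⟯)
    (g : VectorField I M →ₗ[C^(⊤ : ℕ∞)⟮I, M; ℝ⟯] VectorField I M →ₗ[C^(⊤ : ℕ∞)⟮I, M; ℝ⟯] C^(⊤ : ℕ∞)⟮I, M; ℝ⟯)
    (ν : ℝ) (hν : 0 < ν)
    (hφφ : ∀ X, φ (φ X) = -(Q X) + η X • Q ξ)
    (hηξ : η ξ = 1)
    (hQξ : Q ξ = ν • ξ)
    (hD : ∀ X, η X = 0 → η (φ X) = 0)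
    (hg_symm : ∀ X Y, g X Y = g Y X)
    (hg_pos : ∀ X (x : M), 0 ≤ g X X x)
    (hg_def : ∀ X, g X X = 0 → X = 0)
    (hcompat : ∀ X Y, g (φ X) (φ Y) = g X (Q Y) - η X * η (Q Y))
    (hN1 : ∀ X Y, N1 φ Q ξ η X Y = 0)
    :
    ∀ X, ⁅ξ, φ X⁆ = φ ⁅ξ, X⁆ :=
  weak_normal_implies_N3_vanishes_general φ Q hQ ξ η g ν hν hφφ hηξ hQξ hD hg_def hcompat hN1
end
end

section
/- For a weak contact metric structure (φ,Q,ξ,η,g) on M, the vector field ξ is Killing if and only if the tensor N⁽³⁾ = £_ξφ vanishes; that is, ξ(g(X,Y)) = g([ξ,X],Y) + g(X,[ξ,Y]) holds for all smooth vector fields X,Y if and only if [ξ,φX] = φ[ξ,X] holds for all smooth vector fields X. -/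
open scoped Manifold

noncomputable section

variable {E : Type*} [NormedAddCommGroup E] [NormedSpace ℝ E]
  {H : Type*} [TopologicalSpace H] {I : ModelWithCorners ℝ E H}
  {M : Type*} [TopologicalSpace M] [ChartedSpace H M]

/-! On a weak contact metric manifold, `Φ = dη` forces `φξ = 0`, then `£_ξ η = 0` and
`g(·, ξ) = η`; since `£_ξ` commutes with `d`, also `£_ξ Φ = 0`. If `ξ` is Killing this gives
`g(Y, (£_ξ φ)X) = (£_ξ Φ)(Y, X) = 0` for all `Y`, hence `£_ξ φ = 0`. Conversely, as `Q` is onto,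
`φ² = -Q + η ⊗ Qξ` writes every vector field as `fξ + φW`, and `£_ξ g` vanishes against `ξ`
(because `g(·, ξ) = η`) and against `φW` (because `£_ξ Φ = 0` and `£_ξ φ = 0`). -/

theorem Derivation.commutator_smul_self_add {R A : Type*} [CommRing R] [CommRing A]
    [Algebra R A] (D D' : Derivation R A A) (a : A) : ⁅D, a • D + D'⁆ = D a • D + ⁅D, D'⁆ := by
  ext b
  simp only [Derivation.commutator_apply, Derivation.add_apply, Derivation.smul_apply,
    smul_eq_mul, map_add, Derivation.leibniz]
  ring

/-- `£_ξ B = 0`. -/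
def IsLieInvariant (ξ : VectorField I M)
    (B : VectorField I M → VectorField I M → C^(⊤ : ℕ∞)⟮I, M; ℝ⟯) : Prop :=
  ∀ X Y, ξ (B X Y) = B ⁅ξ, X⁆ Y + B X ⁅ξ, Y⁆

section dEta

variable (η : VectorField I M →ₗ[C^(⊤ : ℕ∞)⟮I, M; ℝ⟯] C^(⊤ : ℕ∞)⟮I, M; ℝ⟯)

theorem dEta_swap (X Y : VectorField I M) : dEta η Y X = -dEta η X Y := by
  simp only [dEta, ← lie_skew X Y, map_neg, ← smul_neg]
  congr 1
  abel

/-- `£_ξ` commutes with `d`. -/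
theorem isLieInvariant_dEta {ξ : VectorField I M} (hη : ∀ Z, ξ (η Z) = η ⁅ξ, Z⁆) :
    IsLieInvariant ξ (dEta η) := by
  intro X Y
  have jacobi : η ⁅⁅ξ, X⁆, Y⁆ = ξ (η ⁅X, Y⁆) - η ⁅X, ⁅ξ, Y⁆⁆ := by
    rw [hη, ← map_sub, LieRing.leibniz_lie ξ X Y, add_sub_cancel_right]
  simp only [dEta, ξ.map_smul_of_tower, ← smul_add]
  congr 1
  rw [map_sub, map_sub, jacobi, Derivation.commutator_apply, Derivation.commutator_apply,
    ← hη X, ← hη Y]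
  ring

end dEta

section WeakContact

variable {φ Q : VectorField I M →ₗ[C^(⊤ : ℕ∞)⟮I, M; ℝ⟯] VectorField I M} {ξ : VectorField I M}
  {η : VectorField I M →ₗ[C^(⊤ : ℕ∞)⟮I, M; ℝ⟯] C^(⊤ : ℕ∞)⟮I, M; ℝ⟯}
  {g : VectorField I M →ₗ[C^(⊤ : ℕ∞)⟮I, M; ℝ⟯] VectorField I M →ₗ[C^(⊤ : ℕ∞)⟮I, M; ℝ⟯]
    C^(⊤ : ℕ∞)⟮I, M; ℝ⟯}

theorem eq_of_forall_apply_eq_of_definite (hg_def : ∀ X, g X X = 0 → X = 0)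
    {A B : VectorField I M} (h : ∀ Y, g Y A = g Y B) : A = B :=
  sub_eq_zero.mp (hg_def _ (by rw [map_sub, h, sub_self]))

theorem phi_xi_eq_zero (hφφ : ∀ X, φ (φ X) = -(Q X) + η X • Q ξ) (hηξ : η ξ = 1)
    (hg_def : ∀ X, g X X = 0 → X = 0) (hcontact : ∀ X Y, g X (φ Y) = dEta η X Y) :
    φ ξ = 0 := by
  have hφφξ : φ (φ ξ) = 0 := by rw [hφφ, hηξ, one_smul, neg_add_cancel]
  apply hg_def
  rw [hcontact, dEta_swap, ← hcontact, hφφξ, map_zero, neg_zero]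

theorem xi_eta_eq_eta_lie (hφξ : φ ξ = 0) (hηξ : η ξ = 1)
    (hcontact : ∀ X Y, g X (φ Y) = dEta η X Y) (Z : VectorField I M) :
    ξ (η Z) = η ⁅ξ, Z⁆ := by
  have h := hcontact Z ξ
  rw [hφξ, map_zero, dEta, hηξ, Derivation.map_one_eq_zero, ← lie_skew Z ξ, map_neg,
    eq_comm, smul_eq_zero] at h
  linear_combination -h.resolve_left (by norm_num)

theorem g_xi_eq_eta {ν : ℝ} (hν : ν ≠ 0) (hφξ : φ ξ = 0) (hηξ : η ξ = 1) (hQξ : Q ξ = ν • ξ)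
    (hcompat : ∀ X Y, g (φ X) (φ Y) = g X (Q Y) - η X * η (Q Y)) (X : VectorField I M) :
    g X ξ = η X := by
  have h := hcompat X ξ
  rw [hφξ, map_zero, hQξ, (g X).map_smul_of_tower, η.map_smul_of_tower, hηξ, mul_smul_comm,
    mul_one, ← smul_sub, eq_comm, smul_eq_zero] at h
  exact sub_eq_zero.mp (h.resolve_left hν)

theorem lie_phi_of_isLieInvariant (hg_def : ∀ X, g X X = 0 → X = 0)
    (hK : IsLieInvariant ξ (g · ·)) (hΦ : IsLieInvariant ξ (fun X Y => g X (φ Y)))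
    (X : VectorField I M) :
    ⁅ξ, φ X⁆ = φ ⁅ξ, X⁆ :=
  eq_of_forall_apply_eq_of_definite hg_def fun Y =>
    add_left_cancel ((hK Y (φ X)).symm.trans (hΦ Y X))

theorem exists_eq_smul_xi_add_phi (hQ : Function.Surjective Q)
    (hφφ : ∀ X, φ (φ X) = -(Q X) + η X • Q ξ) {ν : ℝ} (hQξ : Q ξ = ν • ξ) (Y : VectorField I M) :
    ∃ (f : C^(⊤ : ℕ∞)⟮I, M; ℝ⟯) (W : VectorField I M), Y = f • ξ + φ W := by
  obtain ⟨Z, rfl⟩ := hQ Y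
  refine ⟨ν • η Z, -φ Z, ?_⟩
  rw [map_neg, hφφ, hQξ, smul_comm, smul_assoc]
  abel

theorem isLieInvariant_of_lie_phi
    (hspan : ∀ Y, ∃ (f : C^(⊤ : ℕ∞)⟮I, M; ℝ⟯) (W : VectorField I M), Y = f • ξ + φ W)
    (hξ : ∀ X, ξ (g X ξ) = g ⁅ξ, X⁆ ξ) (hΦ : IsLieInvariant ξ (fun X Y => g X (φ Y)))
    (hN : ∀ X, ⁅ξ, φ X⁆ = φ ⁅ξ, X⁆) : IsLieInvariant ξ (g · ·) := by
  intro X Y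
  obtain ⟨f, W, rfl⟩ := hspan Y
  have hXΦ : ξ (g X (φ W)) = g ⁅ξ, X⁆ (φ W) + g X ⁅ξ, φ W⁆ := hN W ▸ hΦ X W
  simp only [Derivation.commutator_smul_self_add, map_add, map_smul, smul_eq_mul,
    Derivation.leibniz, hξ, hXΦ]
  ring

end WeakContact

theorem weak_contact_killing_iff_N3_vanishes_general
    (φ Q : VectorField I M →ₗ[C^(⊤ : ℕ∞)⟮I, M; ℝ⟯] VectorField I M)
    (hQ : Function.Bijective Q)
    (ξ : VectorField I M)
    (η : VectorField I M →ₗ[C^(⊤ : ℕ∞)⟮I, M; ℝ⟯] C^(⊤ : ℕ∞)⟮I, M; ℝ⟯)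
    (g : VectorField I M →ₗ[C^(⊤ : ℕ∞)⟮I, M; ℝ⟯] VectorField I M →ₗ[C^(⊤ : ℕ∞)⟮I, M; ℝ⟯] C^(⊤ : ℕ∞)⟮I, M; ℝ⟯)
    (ν : ℝ) (hν : 0 < ν)
    (hφφ : ∀ X, φ (φ X) = -(Q X) + η X • Q ξ)
    (hηξ : η ξ = 1)
    (hQξ : Q ξ = ν • ξ)
    (hg_def : ∀ X, g X X = 0 → X = 0)
    (hcompat : ∀ X Y, g (φ X) (φ Y) = g X (Q Y) - η X * η (Q Y))
    (hcontact : ∀ X Y, g X (φ Y) = dEta η X Y)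
    :
    (∀ X Y, ξ (g X Y) = g ⁅ξ, X⁆ Y + g X ⁅ξ, Y⁆) ↔ (∀ X, ⁅ξ, φ X⁆ = φ ⁅ξ, X⁆) := by
  have hφξ : φ ξ = 0 := phi_xi_eq_zero hφφ hηξ hg_def hcontact
  have hη := xi_eta_eq_eta_lie hφξ hηξ hcontact
  have hΦ : IsLieInvariant ξ (fun X Y => g X (φ Y)) := by
    simpa only [IsLieInvariant, hcontact] using isLieInvariant_dEta η hη
  refine ⟨fun hK => lie_phi_of_isLieInvariant hg_def hK hΦ, fun hN => ?_⟩
  have hξ (X : VectorField I M) : ξ (g X ξ) = g ⁅ξ, X⁆ ξ := by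
    rw [g_xi_eq_eta hν.ne' hφξ hηξ hQξ hcompat, g_xi_eq_eta hν.ne' hφξ hηξ hQξ hcompat, hη]
  exact isLieInvariant_of_lie_phi (exists_eq_smul_xi_add_phi hQ.surjective hφφ hQξ) hξ hΦ hN

theorem weak_contact_killing_iff_N3_vanishes
    [FiniteDimensional ℝ E] [I.Boundaryless] [IsManifold I (⊤ : ℕ∞) M]
    (n : ℕ) (hn : 1 ≤ n) (hdim : Module.finrank ℝ E = 2 * n + 1)
    (φ Q : VectorField I M →ₗ[C^(⊤ : ℕ∞)⟮I, M; ℝ⟯] VectorField I M)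
    (hQ : Function.Bijective Q)
    (ξ : VectorField I M)
    (η : VectorField I M →ₗ[C^(⊤ : ℕ∞)⟮I, M; ℝ⟯] C^(⊤ : ℕ∞)⟮I, M; ℝ⟯)
    (g : VectorField I M →ₗ[C^(⊤ : ℕ∞)⟮I, M; ℝ⟯] VectorField I M →ₗ[C^(⊤ : ℕ∞)⟮I, M; ℝ⟯] C^(⊤ : ℕ∞)⟮I, M; ℝ⟯)
    (ν : ℝ) (hν : 0 < ν)
    (hφφ : ∀ X, φ (φ X) = -(Q X) + η X • Q ξ)
    (hηξ : η ξ = 1)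
    (hQξ : Q ξ = ν • ξ)
    (hD : ∀ X, η X = 0 → η (φ X) = 0)
    (hg_symm : ∀ X Y, g X Y = g Y X)
    (hg_pos : ∀ X (x : M), 0 ≤ g X X x)
    (hg_def : ∀ X, g X X = 0 → X = 0)
    (hcompat : ∀ X Y, g (φ X) (φ Y) = g X (Q Y) - η X * η (Q Y))
    (hcontact : ∀ X Y, g X (φ Y) = dEta η X Y)
    :
    (∀ X Y, ξ (g X Y) = g ⁅ξ, X⁆ Y + g X ⁅ξ, Y⁆) ↔ (∀ X, ⁅ξ, φ X⁆ = φ ⁅ξ, X⁆) :=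
  weak_contact_killing_iff_N3_vanishes_general φ Q hQ ξ η g ν hν hφφ hηξ hQξ hg_def hcompat hcontact
end
end

section
/- For a weak almost cosymplectic structure (φ,Q,ξ,η,g) on M (a weak almost contact metric structure with dη ≡ 0 and dΦ ≡ 0), the tensors N⁽²⁾ and N⁽⁴⁾ vanish identically, the tensor N⁽¹⁾ coincides with the Nijenhuis torsion [φ,φ] of φ, and ξ is a Killing vector field if and only if N⁽³⁾ = £_ξφ vanishes, i.e., ξ(g(X,Y)) = g([ξ,X],Y) + g(X,[ξ,Y]) for all smooth vector fields X,Y if and only if [ξ,φX] = φ[ξ,X] for all smooth vector fields X. -/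
open scoped Manifold

noncomputable section

variable {E : Type*} [NormedAddCommGroup E] [NormedSpace ℝ E]
  {H : Type*} [TopologicalSpace H] {I : ModelWithCorners ℝ E H}
  {M : Type*} [TopologicalSpace M] [ChartedSpace H M]

set_option maxHeartbeats 2000000 in
theorem weak_almost_cosymplectic_properties
    [FiniteDimensional ℝ E] [I.Boundaryless] [IsManifold I (⊤ : ℕ∞) M]
    (n : ℕ) (hn : 1 ≤ n) (hdim : Module.finrank ℝ E = 2 * n + 1)
    (φ Q : VectorField I M →ₗ[C^(⊤ : ℕ∞)⟮I, M; ℝ⟯] VectorField I M)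
    (hQ : Function.Bijective Q)
    (ξ : VectorField I M)
    (η : VectorField I M →ₗ[C^(⊤ : ℕ∞)⟮I, M; ℝ⟯] C^(⊤ : ℕ∞)⟮I, M; ℝ⟯)
    (g : VectorField I M →ₗ[C^(⊤ : ℕ∞)⟮I, M; ℝ⟯] VectorField I M →ₗ[C^(⊤ : ℕ∞)⟮I, M; ℝ⟯] C^(⊤ : ℕ∞)⟮I, M; ℝ⟯)
    (ν : ℝ) (hν : 0 < ν)
    (hφφ : ∀ X, φ (φ X) = -(Q X) + η X • Q ξ)
    (hηξ : η ξ = 1)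
    (hQξ : Q ξ = ν • ξ)
    (hD : ∀ X, η X = 0 → η (φ X) = 0)
    (hg_symm : ∀ X Y, g X Y = g Y X)
    (hg_pos : ∀ X (x : M), 0 ≤ g X X x)
    (hg_def : ∀ X, g X X = 0 → X = 0)
    (hcompat : ∀ X Y, g (φ X) (φ Y) = g X (Q Y) - η X * η (Q Y))
    (hdη : ∀ X Y, dEta η X Y = 0)
    (hdΦ : ∀ X Y Z, ((3 : ℝ)⁻¹ • (X (g Y (φ Z)) + Y (g Z (φ X)) + Z (g X (φ Y)) -
      g ⁅X, Y⁆ (φ Z) - g ⁅Z, X⁆ (φ Y) - g ⁅Y, Z⁆ (φ X)) : C^(⊤ : ℕ∞)⟮I, M; ℝ⟯) = 0)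
    :
    (∀ X Y, N2 φ η X Y = 0) ∧ (∀ X, ξ (η X) - η ⁅ξ, X⁆ = 0) ∧
    (∀ X Y, N1 φ Q ξ η X Y = nijenhuis ⇑φ X Y) ∧
    ((∀ X Y, ξ (g X Y) = g ⁅ξ, X⁆ Y + g X ⁅ξ, Y⁆) ↔ (∀ X, ⁅ξ, φ X⁆ = φ ⁅ξ, X⁆)) := by
  classical
  -- unscaled dη = 0
  have h2η : ∀ X Y : VectorField I M, X (η Y) - Y (η X) - η ⁅X, Y⁆ = 0 := by
    intro X Y
    have h := hdη X Y
    unfold dEta at h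
    have h' := congrArg (fun c : C^(⊤ : ℕ∞)⟮I, M; ℝ⟯ => (2:ℝ) • c) h
    simp only [smul_smul, smul_zero] at h'
    rw [show (2:ℝ) * 2⁻¹ = 1 by norm_num, one_smul] at h'
    exact h'
  -- unscaled dΦ = 0
  have h3Φ : ∀ X Y Z : VectorField I M,
      X (g Y (φ Z)) + Y (g Z (φ X)) + Z (g X (φ Y)) -
      g ⁅X, Y⁆ (φ Z) - g ⁅Z, X⁆ (φ Y) - g ⁅Y, Z⁆ (φ X) = 0 := by
    intro X Y Z
    have h := hdΦ X Y Z
    have h' := congrArg (fun c : C^(⊤ : ℕ∞)⟮I, M; ℝ⟯ => (3:ℝ) • c) h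
    simp only [smul_smul, smul_zero] at h'
    rw [show (3:ℝ) * 3⁻¹ = 1 by norm_num, one_smul] at h'
    exact h'
  -- φ ξ = 0
  have hφξ : φ ξ = 0 := by
    have e1 : φ (φ ξ) = 0 := by rw [hφφ, hηξ, one_smul, neg_add_cancel]
    have e2 : φ ξ = η (φ ξ) • ξ := by
      apply hQ.injective
      have e3 := hφφ (φ ξ)
      rw [e1, map_zero] at e3
      rw [map_smul]
      have := e3.symm
      rwa [neg_add_eq_zero] at this
    have e5 : (η (φ ξ) * η (φ ξ)) • ξ = 0 := by
      calc (η (φ ξ) * η (φ ξ)) • ξ = η (φ ξ) • (η (φ ξ) • ξ) := by rw [mul_smul]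
        _ = η (φ ξ) • φ ξ := by rw [← e2]
        _ = φ (η (φ ξ) • ξ) := by rw [map_smul]
        _ = φ (φ ξ) := by rw [← e2]
        _ = 0 := e1
    have e6 : η (φ ξ) * η (φ ξ) = 0 := by
      have h := congrArg η e5
      rw [map_smul, hηξ, map_zero] at h
      simpa [smul_eq_mul] using h
    have e7 : η (φ ξ) = 0 := by
      ext x
      have := congrArg (fun u : C^(⊤ : ℕ∞)⟮I, M; ℝ⟯ => u x) e6
      simpa [mul_self_eq_zero] using this
    rw [e2, e7, zero_smul]
  -- η ∘ φ = 0
  have hηφ : ∀ X, η (φ X) = 0 := by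
    intro X
    have h0 : η (X - η X • ξ) = 0 := by
      rw [map_sub, map_smul, hηξ, smul_eq_mul, mul_one, sub_self]
    have h1 : φ X = φ (X - η X • ξ) := by
      rw [map_sub, map_smul, hφξ, smul_zero, sub_zero]
    rw [h1]; exact hD _ h0
  set νR : C^(⊤ : ℕ∞)⟮I, M; ℝ⟯ := ν • (1 : C^(⊤ : ℕ∞)⟮I, M; ℝ⟯) with hνRdef
  have hQξ' : Q ξ = νR • ξ := by
    rw [hQξ]
    conv_rhs => rw [hνRdef, smul_assoc, one_smul]
  have hmulν : ∀ c : C^(⊤ : ℕ∞)⟮I, M; ℝ⟯, νR * c = ν • c := by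
    intro c; rw [hνRdef, smul_mul_assoc, one_mul]
  have hν0 : ∀ c : C^(⊤ : ℕ∞)⟮I, M; ℝ⟯, ν • c = 0 → c = 0 := by
    intro c hc
    have := congrArg (fun u : C^(⊤ : ℕ∞)⟮I, M; ℝ⟯ => ν⁻¹ • u) hc
    simpa [smul_smul, inv_mul_cancel₀ (ne_of_gt hν)] using this
  -- g X ξ = η X
  have hgξ : ∀ X, g X ξ = η X := by
    intro X
    have h := hcompat X ξ
    rw [hφξ, map_zero, hQξ', map_smul, smul_eq_mul, map_smul, smul_eq_mul, hηξ, mul_one] at h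
    have h2 : ν • (g X ξ - η X) = 0 := by
      rw [← hmulν]
      linear_combination -h
    have := hν0 _ h2
    exact sub_eq_zero.mp this
  have hηQ : ∀ Y, η (Q Y) = νR * η Y := by
    intro Y
    have h := congrArg η (hφφ Y)
    rw [hηφ, map_add, map_neg, map_smul, smul_eq_mul, hQξ', map_smul, smul_eq_mul, hηξ,
      mul_one] at h
    linear_combination h
  have hgQξ : ∀ X, g X (Q ξ) = νR * η X := by
    intro X; rw [hQξ', map_smul, smul_eq_mul, hgξ]
  -- the key skew-symmetry identity
  have hA : ∀ X Y, g (φ X) (φ Y) + g X (φ (φ Y)) = 0 := by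
    intro X Y
    have c1 := hcompat X Y
    have c2 : g X (φ (φ Y)) = -(g X (Q Y)) + η Y * (νR * η X) := by
      rw [hφφ Y, map_add, map_neg, map_smul, smul_eq_mul, hgQξ]
    rw [c1, c2, hηQ]; ring
  -- N4 = 0
  have hN4 : ∀ X, ξ (η X) - η ⁅ξ, X⁆ = 0 := by
    intro X
    have h := h2η ξ X
    rw [hηξ] at h
    simpa using h
  -- the identity (*) from dΦ(ξ,X,Y) = 0
  have hstar : ∀ X Y, ξ (g X (φ Y)) - g ⁅ξ, X⁆ (φ Y) + g ⁅ξ, Y⁆ (φ X) = 0 := by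
    intro X Y
    have h := h3Φ ξ X Y
    have hgξφ : g ξ (φ X) = 0 := by rw [hg_symm, hgξ, hηφ]
    have e2 : g ⁅Y, ξ⁆ (φ X) = -(g ⁅ξ, Y⁆ (φ X)) := by
      rw [← lie_skew, map_neg, LinearMap.neg_apply]
    rw [hφξ, hgξφ, e2] at h
    simp only [map_zero, LinearMap.zero_apply] at h
    linear_combination h
  -- decomposition of Q
  have hq : ∀ U, Q U = (η U * νR) • ξ - φ (φ U) := by
    intro U
    rw [hφφ U, hQξ', smul_smul]
    abel
  refine ⟨?_, hN4, ?_, ?_⟩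
  · -- N2 = 0
    intro X Y
    have a1 := h2η (φ X) Y
    have a2 := h2η (φ Y) X
    rw [hηφ X] at a1
    rw [hηφ Y] at a2
    simp only [map_zero, sub_zero] at a1 a2
    unfold N2
    linear_combination a1 - a2
  · -- N1 = nijenhuis
    intro X Y
    unfold N1
    rw [hdη, smul_zero, zero_smul, add_zero]
  · constructor
    · -- Killing → N3 = 0
      intro hK Y
      have hXV : ∀ X, g X (⁅ξ, φ Y⁆ - φ ⁅ξ, Y⁆) =
          -(g ⁅ξ, Y⁆ (φ X)) - g X (φ ⁅ξ, Y⁆) := by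
        intro X
        rw [map_sub]
        have h1 := hstar X Y
        have h2 := hK X (φ Y)
        linear_combination h1 - h2
      have hφV : ∀ U, g (φ U) (⁅ξ, φ Y⁆ - φ ⁅ξ, Y⁆) = 0 := by
        intro U
        rw [hXV (φ U)]
        have h4 := hA ⁅ξ, Y⁆ U
        have h5 := hg_symm (φ U) (φ ⁅ξ, Y⁆)
        linear_combination -h4 - h5
      have hξV : g ξ (⁅ξ, φ Y⁆ - φ ⁅ξ, Y⁆) = 0 := by
        rw [map_sub]
        have b1 : η ⁅ξ, φ Y⁆ = 0 := by
          have h := hN4 (φ Y)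
          rw [hηφ] at h
          simpa using h
        have b2 : g ξ ⁅ξ, φ Y⁆ = 0 := by rw [hg_symm, hgξ, b1]
        have b3 : g ξ (φ ⁅ξ, Y⁆) = 0 := by rw [hg_symm, hgξ, hηφ]
        rw [b2, b3, sub_zero]
      have hQV : ∀ U, g (Q U) (⁅ξ, φ Y⁆ - φ ⁅ξ, Y⁆) = 0 := by
        intro U
        rw [hq U, LinearMap.map_sub₂, LinearMap.map_smul₂, hξV,
          smul_zero, hφV (φ U), sub_zero]
      obtain ⟨U, hU⟩ := hQ.surjective (⁅ξ, φ Y⁆ - φ ⁅ξ, Y⁆)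
      have hz := hQV U
      rw [hU] at hz
      exact sub_eq_zero.mp (hg_def _ hz)
    · -- N3 = 0 → Killing
      intro hN X Y
      have hbase : ∀ U, ξ (g X (φ (φ U))) - g ⁅ξ, X⁆ (φ (φ U)) - g X ⁅ξ, φ (φ U)⁆ = 0 := by
        intro U
        have h1 := hstar X (φ U)
        have h2 : ⁅ξ, φ (φ U)⁆ = φ (φ ⁅ξ, U⁆) := by rw [hN (φ U), hN U]
        rw [h2]
        have h3 : g ⁅ξ, φ U⁆ (φ X) = g (φ ⁅ξ, U⁆) (φ X) := by rw [hN U]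
        have h4 := hA X ⁅ξ, U⁆
        have h5 := hg_symm (φ ⁅ξ, U⁆) (φ X)
        linear_combination h1 - h3 - h5 - h4
      have hsmul : ∀ c : C^(⊤ : ℕ∞)⟮I, M; ℝ⟯,
          ξ (g X (c • ξ)) - g ⁅ξ, X⁆ (c • ξ) - g X ⁅ξ, c • ξ⁆ = 0 := by
        intro c
        have hbr : ⁅ξ, c • ξ⁆ = (ξ c) • ξ := by
          apply Derivation.ext
          intro f
          rw [Derivation.commutator_apply, Derivation.smul_apply, Derivation.smul_apply,
            smul_eq_mul, smul_eq_mul, Derivation.leibniz, smul_eq_mul, smul_eq_mul]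
          simp only [Derivation.smul_apply, smul_eq_mul]
          ring
        rw [hbr]
        simp only [map_smul, smul_eq_mul, hgξ]
        have hl : ξ (c * η X) = c * ξ (η X) + η X * ξ c := by
          rw [Derivation.leibniz]; simp [smul_eq_mul]
        rw [hl]
        linear_combination c * hN4 X
      have hQ2 : ∀ U, ξ (g X (Q U)) - g ⁅ξ, X⁆ (Q U) - g X ⁅ξ, Q U⁆ = 0 := by
        intro U
        rw [hq U]
        have hlie : ⁅ξ, (η U * νR) • ξ - φ (φ U)⁆ = ⁅ξ, (η U * νR) • ξ⁆ - ⁅ξ, φ (φ U)⁆ :=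
          lie_sub ξ _ _
        rw [hlie]
        simp only [map_sub, LinearMap.sub_apply]
        linear_combination hsmul (η U * νR) - hbase U
      obtain ⟨U, hU⟩ := hQ.surjective Y
      have h := hQ2 U
      rw [hU] at h
      linear_combination h
end
end
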